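/- Assume the Bethe equations hold. Define the entire function ψ(x) = (∏_{i=1}^m (x − s_i)) · exp(−V(x)/(2ħ)), and let U = (V′)² − 2ħV″ − 4ħ ∑_{i=1}^m Q_i ∈ ℂ[X], where for each i, Q_i ∈ ℂ[X] is the unique polynomial with V′ − V′(s_i) = (X − s_i)·Q_i. Then ψ satisfies the Schrödinger equation 4ħ² ψ″(x) = U(x) ψ(x) for every x ∈ ℂ, where ψ″ denotes the second complex derivative of ψ. -/

import Mathlib

/-!
Write `ψ = p · exp W` with `p = ∏ (X - s i)` and `W = -V / (2ħ)`. Differentiating twice gives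
`4ħ²ψ'' = (4ħ²p'' - 4ħp'V' - 2ħpV'' + pV'²) exp W`, so the equation is the polynomial identity
`p · ∑ Q i = V'p' - ħp''`. As `p · Q i = pᵢ (V' - V'(s i))` with `pᵢ = p / (X - s i)` and
`∑ pᵢ = p'`, it amounts to `∑ V'(s i) pᵢ = ħp''`. By the Bethe equations the left side is
`2ħ ∑_{i ≠ j} pᵢ / (s i - s j)`; symmetrising in `i, j` and using `pᵢ - pⱼ = (s i - s j) pᵢⱼ`
turns it into `ħ ∑_{i ≠ j} pᵢⱼ = ħp''`.
-/

open Finset Polynomial Lagrange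

section Nodal

variable {K : Type*} [Field K] {ι : Type*} [DecidableEq ι] {t : Finset ι} {v : ι → K}

theorem derivative_derivative_nodal :
    derivative (derivative (nodal t v))
      = ∑ i ∈ t, ∑ j ∈ t.erase i, nodal ((t.erase i).erase j) v := by
  simp only [derivative_nodal, derivative_sum]

theorem nodal_erase_sub_nodal_erase {i j : ι} (hi : i ∈ t) (hj : j ∈ t.erase i) :
    nodal (t.erase i) v - nodal (t.erase j) v
      = C (v i - v j) * nodal ((t.erase i).erase j) v := by
  have hij : i ∈ t.erase j := mem_erase.mpr ⟨(ne_of_mem_erase hj).symm, hi⟩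
  rw [nodal_eq_mul_nodal_erase hj, nodal_eq_mul_nodal_erase hij, erase_right_comm, C_sub]
  ring

theorem sum_two_mul_sum_inv_sub_mul_nodal_erase (hv : Set.InjOn v t) :
    ∑ i ∈ t, C (2 * ∑ j ∈ t.erase i, 1 / (v i - v j)) * nodal (t.erase i) v
      = derivative (derivative (nodal t v)) := by
  set g : ι → ι → K[X] := fun i j => C (1 / (v i - v j)) * nodal (t.erase i) v
  have hpair : ∀ i ∈ t, ∀ j ∈ t.erase i, g i j + g j i = nodal ((t.erase i).erase j) v := by
    intro i hi j hj
    have hvij : v i - v j ≠ 0 :=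
      sub_ne_zero.mpr fun h => ne_of_mem_erase hj (hv (mem_of_mem_erase hj) hi h.symm)
    calc g i j + g j i = C (1 / (v i - v j)) * (nodal (t.erase i) v - nodal (t.erase j) v) := by
          simp only [g, ← neg_sub (v i), div_neg, C_neg]; ring
      _ = nodal ((t.erase i).erase j) v := by
          rw [nodal_erase_sub_nodal_erase hi hj, ← mul_assoc, ← C_mul, one_div_mul_cancel hvij,
            C_1, one_mul]
  have hswap : ∑ i ∈ t, ∑ j ∈ t.erase i, g i j = ∑ i ∈ t, ∑ j ∈ t.erase i, g j i :=
    sum_comm' fun i j => by simp only [mem_erase]; tauto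
  calc ∑ i ∈ t, C (2 * ∑ j ∈ t.erase i, 1 / (v i - v j)) * nodal (t.erase i) v
      = ∑ i ∈ t, ∑ j ∈ t.erase i, g i j + ∑ i ∈ t, ∑ j ∈ t.erase i, g i j := by
        rw [← sum_add_distrib]
        refine sum_congr rfl fun i _ => ?_
        simp only [g, ← two_mul, C_mul, map_sum, sum_mul, mul_sum, map_ofNat, mul_assoc]
    _ = ∑ i ∈ t, ∑ j ∈ t.erase i, g i j + ∑ i ∈ t, ∑ j ∈ t.erase i, g j i :=
        congrArg _ hswap
    _ = ∑ i ∈ t, ∑ j ∈ t.erase i, (g i j + g j i) := by simp only [← sum_add_distrib]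
    _ = derivative (derivative (nodal t v)) := by
        rw [derivative_derivative_nodal]
        exact sum_congr rfl fun i hi => sum_congr rfl fun j hj => hpair i hi j hj

theorem nodal_mul_sum_eq (P : K[X]) (Q : ι → K[X])
    (hQ : ∀ i ∈ t, P - C (P.eval (v i)) = (X - C (v i)) * Q i) :
    nodal t v * ∑ i ∈ t, Q i
      = P * derivative (nodal t v) - ∑ i ∈ t, C (P.eval (v i)) * nodal (t.erase i) v := by
  rw [derivative_nodal, mul_sum, mul_sum, ← sum_sub_distrib]
  refine sum_congr rfl fun i hi => ?_
  rw [nodal_eq_mul_nodal_erase hi]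
  linear_combination -nodal (t.erase i) v * hQ i hi

theorem nodal_mul_sum_eq_of_bethe (hv : Set.InjOn v t) (P : K[X]) (c : K)
    (hP : ∀ i ∈ t, P.eval (v i) = 2 * c * ∑ j ∈ t.erase i, 1 / (v i - v j)) (Q : ι → K[X])
    (hQ : ∀ i ∈ t, P - C (P.eval (v i)) = (X - C (v i)) * Q i) :
    nodal t v * ∑ i ∈ t, Q i
      = P * derivative (nodal t v) - C c * derivative (derivative (nodal t v)) := by
  rw [nodal_mul_sum_eq P Q hQ, ← sum_two_mul_sum_inv_sub_mul_nodal_erase hv, mul_sum]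
  congr 1
  refine sum_congr rfl fun i hi => ?_
  rw [hP i hi, mul_comm 2 c, mul_assoc, C_mul, mul_assoc]

end Nodal

theorem hasDerivAt_eval_mul_cexp_eval (p W : ℂ[X]) (x : ℂ) :
    HasDerivAt (fun y => p.eval y * Complex.exp (W.eval y))
      ((derivative p + p * derivative W).eval x * Complex.exp (W.eval x)) x := by
  refine ((p.hasDerivAt x).mul (W.hasDerivAt x).cexp).congr_deriv ?_
  simp only [eval_add, eval_mul]
  ring

theorem deriv_deriv_eval_mul_cexp_eval (p W : ℂ[X]) (x : ℂ) :
    deriv (deriv fun y => p.eval y * Complex.exp (W.eval y)) x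
      = (derivative (derivative p) + 2 * derivative p * derivative W
          + p * derivative (derivative W) + p * derivative W ^ 2).eval x
        * Complex.exp (W.eval x) := by
  have hderiv : deriv (fun y => p.eval y * Complex.exp (W.eval y))
      = fun y => (derivative p + p * derivative W).eval y * Complex.exp (W.eval y) :=
    funext fun y => (hasDerivAt_eval_mul_cexp_eval p W y).deriv
  rw [hderiv, (hasDerivAt_eval_mul_cexp_eval _ W x).deriv]
  congr 2
  simp only [derivative_add, derivative_mul]
  ring

theorem schroedinger_equation (m : ℕ) (hbar : ℂ) (hhbar : hbar ≠ 0) (V : Polynomial ℂ)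
    (s : Fin m → ℂ) (hs : Function.Injective s)
    (hBethe : ∀ i, V.derivative.eval (s i)
      = 2 * hbar * ∑ j ∈ univ.erase i, 1 / (s i - s j))
    (Q : Fin m → Polynomial ℂ)
    (hQ : ∀ i, V.derivative - C (V.derivative.eval (s i)) = (X - C (s i)) * Q i) :
    ∀ x : ℂ,
      4 * hbar ^ 2 *
          deriv (deriv (fun y : ℂ =>
            (∏ i, (y - s i)) * Complex.exp (-(V.eval y) / (2 * hbar)))) x
        = (V.derivative ^ 2 - C (2 * hbar) * derivative V.derivative
              - C (4 * hbar) * ∑ i, Q i).eval x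
            * ((∏ i, (x - s i)) * Complex.exp (-(V.eval x) / (2 * hbar))) := by
  intro x
  set p := nodal univ s
  set W := -C (2 * hbar)⁻¹ * V
  have hψ : ∀ y, (∏ i, (y - s i)) * Complex.exp (-(V.eval y) / (2 * hbar))
      = p.eval y * Complex.exp (W.eval y) := fun y => by
    simp only [p, W, eval_nodal, eval_mul, eval_neg, eval_C, neg_mul, mul_neg, div_eq_inv_mul]
  have hpQ : p * ∑ i, Q i = derivative V * derivative p - C hbar * derivative (derivative p) :=
    nodal_mul_sum_eq_of_bethe hs.injOn _ hbar (fun i _ => hBethe i) Q fun i _ => hQ i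
  have hinv : C (2 * hbar)⁻¹ * C (2 * hbar) = 1 := by
    rw [← C_mul, inv_mul_cancel₀ (mul_ne_zero two_ne_zero hhbar), C_1]
  have hpoly : C (4 * hbar ^ 2) * (derivative (derivative p) + 2 * derivative p * derivative W
      + p * derivative (derivative W) + p * derivative W ^ 2)
      = (derivative V ^ 2 - C (2 * hbar) * derivative (derivative V)
          - C (4 * hbar) * ∑ i, Q i) * p := by
    simp only [W, derivative_mul, derivative_neg, derivative_C, zero_mul, zero_add, neg_mul]
    simp only [C_mul, C_pow, C_ofNat] at hinv ⊢
    linear_combination (4 * C hbar) * hpQ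
      + (-4 * C hbar * derivative p * derivative V - 2 * C hbar * p * derivative (derivative V)
        + p * derivative V ^ 2 * (2 * C hbar * C (2 * hbar)⁻¹ + 1)) * hinv
  rw [funext hψ, hψ x, deriv_deriv_eval_mul_cexp_eval, ← mul_assoc, ← mul_assoc, ← eval_mul,
    ← hpoly, eval_C_mul]
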